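/- arXiv:2603.02682 — 6 statements merged into one kernel-verified Lean document; each statement's English description precedes it below -/
import Mathlib

section
/- Shrinkage property of the ℓ_{1-2} thresholding operator: for every x ∈ R^n with S_λ(x) ≠ 0 and every index i, |(T_λ(x))_i - x_i| ≤ λ; i.e. ‖T_λ(x) - x‖_∞ ≤ λ. -/
/-!
Off the support of `S_λ(x)` we have `|x_i| ≤ λ` and `T_λ(x)_i = 0`. On the support,
`x_i = sign(x_i) |x_i|` and `S_λ(x)_i = sign(x_i) (|x_i| - λ)`, so
`T_λ(x)_i - x_i = sign(x_i) (λ |S_λ(x)_i| / ‖S_λ(x)‖₂ - λ)`, and the bracket lies in `[-λ, 0]`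
because `|S_λ(x)_i| ≤ ‖S_λ(x)‖₂`.
-/

open Finset

noncomputable def l1 {k : ℕ} (x : Fin k → ℝ) : ℝ := ∑ i, |x i|

noncomputable def l2 {k : ℕ} (x : Fin k → ℝ) : ℝ := Real.sqrt (∑ i, (x i)^2)

def restr {k : ℕ} (I : Finset (Fin k)) (x : Fin k → ℝ) : Fin k → ℝ :=
  fun i => if i ∈ I then x i else 0


noncomputable def softT {k : ℕ} (lam : ℝ) (x : Fin k → ℝ) : Fin k → ℝ :=
  fun i => max (|x i| - lam) 0 * Real.sign (x i)

noncomputable def enlarge {k : ℕ} (lam : ℝ) (x : Fin k → ℝ) : Fin k → ℝ :=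
  fun i => (1 + lam / l2 x) * x i

noncomputable def thrT {k : ℕ} (lam : ℝ) (x : Fin k → ℝ) : Fin k → ℝ :=
  enlarge lam (softT lam x)

theorem Real.sign_mul_abs (t : ℝ) : Real.sign t * |t| = t := by
  rcases lt_trichotomy t 0 with ht | rfl | ht
  · rw [Real.sign_of_neg ht, abs_of_neg ht]
    ring
  · simp
  · rw [Real.sign_of_pos ht, abs_of_pos ht, one_mul]

theorem Real.abs_sign_le_one (t : ℝ) : |Real.sign t| ≤ 1 := by
  rcases Real.sign_apply_eq t with h | h | h <;> simp [h]

theorem abs_one_add_mul_soft_sub_le {lam c t : ℝ} (hlam : 0 ≤ lam) (hc : 0 ≤ c)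
    (hct : c * max (|t| - lam) 0 ≤ lam) :
    |(1 + c) * (max (|t| - lam) 0 * Real.sign t) - t| ≤ lam := by
  rcases le_or_gt |t| lam with h | h
  · rwa [max_eq_right (sub_nonpos.2 h), zero_mul, mul_zero, zero_sub, abs_neg]
  · rw [max_eq_left (sub_nonneg.2 h.le)] at hct ⊢
    have hca : 0 ≤ c * (|t| - lam) := mul_nonneg hc (sub_nonneg.2 h.le)
    have key : (1 + c) * ((|t| - lam) * Real.sign t) - t
        = Real.sign t * (c * (|t| - lam) - lam) := by
      nth_rw 3 [← Real.sign_mul_abs t]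
      ring
    calc |(1 + c) * ((|t| - lam) * Real.sign t) - t|
        = |Real.sign t| * |c * (|t| - lam) - lam| := by rw [key, abs_mul]
      _ ≤ 1 * lam := by
        gcongr
        · exact Real.abs_sign_le_one t
        · exact abs_le.2 ⟨by linarith, by linarith⟩
      _ = lam := one_mul lam

theorem abs_softT_apply {k : ℕ} {lam : ℝ} (hlam : 0 ≤ lam) (x : Fin k → ℝ) (i : Fin k) :
    |softT lam x i| = max (|x i| - lam) 0 := by
  rcases lt_trichotomy (x i) 0 with h | h | h
  · simp [softT, Real.sign_of_neg h]
  · simp [softT, h, hlam]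
  · simp [softT, Real.sign_of_pos h]

theorem abs_apply_le_l2 {k : ℕ} (x : Fin k → ℝ) (i : Fin k) : |x i| ≤ l2 x := by
  rw [← Real.sqrt_sq_eq_abs]
  exact Real.sqrt_le_sqrt
    (single_le_sum (f := fun j => x j ^ 2) (fun j _ => sq_nonneg _) (mem_univ i))

theorem div_l2_mul_abs_apply_le {k : ℕ} {lam : ℝ} (hlam : 0 ≤ lam) (x : Fin k → ℝ)
    (i : Fin k) : lam / l2 x * |x i| ≤ lam := by
  have hl2 : 0 ≤ l2 x := Real.sqrt_nonneg _
  rcases hl2.eq_or_lt with h | h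
  · rw [← h, div_zero, zero_mul]
    exact hlam
  · calc lam / l2 x * |x i| ≤ lam / l2 x * l2 x := by gcongr; exact abs_apply_le_l2 x i
      _ = lam := div_mul_cancel₀ lam h.ne'

theorem stmt3_general {n : ℕ} (lam : ℝ) (hlam : 0 < lam) (x : Fin n → ℝ) :
    ∀ i, |thrT lam x i - x i| ≤ lam := by
  intro i
  have hc := div_l2_mul_abs_apply_le hlam.le (softT lam x) i
  rw [abs_softT_apply hlam.le] at hc
  exact abs_one_add_mul_soft_sub_le hlam.le (div_nonneg hlam.le (Real.sqrt_nonneg _)) hc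

theorem stmt3 {n : ℕ} (lam : ℝ) (hlam : 0 < lam) (x : Fin n → ℝ)
    (hS : softT lam x ≠ 0) : ∀ i, |thrT lam x i - x i| ≤ lam :=
  stmt3_general lam hlam x
end

section
/- For every x ∈ R^n with S_λ(x) ≠ 0 and every index i with |x_i| > λ, one has |(S_λ(x))_i| ≤ |(T_λ(x))_i| ≤ |x_i|; i.e., the ℓ_{1-2} thresholding operator penalizes each large component less than the soft thresholding operator but never beyond the original value. -/
/-! Soft thresholding shrinks the `i`-th entry to `|x i| - λ`, and the enlargement multiplies it by
`1 + λ / ‖S_λ x‖₂ ≥ 1`. Since every entry is bounded by the `ℓ₂` norm, the enlargement adds at most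
`λ · |s i| / ‖s‖₂ ≤ λ` to the modulus, which gives back at most `|x i|`. -/

open Finset

section Thresholding

variable {k : ℕ} {lam : ℝ} (x : Fin k → ℝ) (i : Fin k)

theorem abs_le_l2 : |x i| ≤ l2 x := by
  rw [l2, ← Real.sqrt_sq_eq_abs]
  exact Real.sqrt_le_sqrt <| single_le_sum (fun j _ => sq_nonneg (x j)) (mem_univ i)

theorem abs_softT (hlam : 0 ≤ lam) : |softT lam x i| = max (|x i| - lam) 0 := by
  rcases eq_or_ne (x i) 0 with hx | hx
  · simp [softT, hx, hlam]
  · have hsign : |Real.sign (x i)| = 1 := by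
      rcases Real.sign_apply_eq_of_ne_zero _ hx with h | h <;> simp [h]
    rw [softT, abs_mul, hsign, mul_one, abs_of_nonneg (le_max_right _ _)]

theorem abs_enlarge (hlam : 0 ≤ lam) : |enlarge lam x i| = (1 + lam / l2 x) * |x i| := by
  have : 0 ≤ l2 x := Real.sqrt_nonneg _
  rw [enlarge, abs_mul, abs_of_nonneg (by positivity)]

theorem abs_le_abs_enlarge (hlam : 0 ≤ lam) : |x i| ≤ |enlarge lam x i| := by
  have : 0 ≤ l2 x := Real.sqrt_nonneg _
  rw [abs_enlarge x i hlam]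
  exact le_mul_of_one_le_left (abs_nonneg _) (le_add_of_nonneg_right (by positivity))

theorem abs_enlarge_le (hlam : 0 ≤ lam) : |enlarge lam x i| ≤ |x i| + lam := by
  have hratio : |x i| / l2 x ≤ 1 := div_le_one_of_le₀ (abs_le_l2 x i) (Real.sqrt_nonneg _)
  calc |enlarge lam x i| = |x i| + lam * (|x i| / l2 x) := by
        rw [abs_enlarge x i hlam]; ring
    _ ≤ |x i| + lam * 1 := by gcongr
    _ = |x i| + lam := by rw [mul_one]

end Thresholding

theorem stmt4_general {n : ℕ} (lam : ℝ) (hlam : 0 < lam) (x : Fin n → ℝ)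
    (i : Fin n) (hi : lam < |x i|) :
    |softT lam x i| ≤ |thrT lam x i| ∧ |thrT lam x i| ≤ |x i| := by
  have hsoft : |softT lam x i| = |x i| - lam := by
    rw [abs_softT x i hlam.le, max_eq_left (by linarith)]
  refine ⟨abs_le_abs_enlarge _ i hlam.le, ?_⟩
  calc |thrT lam x i| ≤ |softT lam x i| + lam := abs_enlarge_le _ i hlam.le
    _ = |x i| := by rw [hsoft]; ring

theorem stmt4 {n : ℕ} (lam : ℝ) (hlam : 0 < lam) (x : Fin n → ℝ)
    (hS : softT lam x ≠ 0) (i : Fin n) (hi : lam < |x i|) :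
    |softT lam x i| ≤ |thrT lam x i| ∧ |thrT lam x i| ≤ |x i| :=
  stmt4_general lam hlam x i hi
end

section
/- Tail bound for block decomposition: Let x ∈ R^n, I ⊂ [n], t ≥ 1, p ≥ 1. Let J := I ∪ I(x;t), where I(x;t) is the set of indices of the t largest coordinates of |x| inside I^c. Then ‖x_{J^c}‖_p ≤ t^{1/p - 1} ‖x_{I^c}‖_1. -/
open Finset

/-!
Every coordinate of `x` outside `J = I ∪ T` is dominated by each of the `t` coordinates in `T`,
so it is at most `S / t`, where `S = ‖x_{Iᶜ}‖₁`. Hence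
`∑_{Jᶜ} |xᵢ|ᵖ ≤ (S / t)^(p-1) ∑_{Jᶜ} |xᵢ| ≤ (S / t)^(p-1) S = (t^(1/p-1) S)ᵖ`.
-/

lemma le_sum_div_of_mem_sdiff_top {ι : Type*} [DecidableEq ι] {f : ι → ℝ} {U T : Finset ι}
    {t : ℕ} (ht : 1 ≤ t) (hf : ∀ i ∈ U, 0 ≤ f i) (hTU : T ⊆ U) (hcard : #T = min t #U)
    (htop : ∀ i ∈ T, ∀ j ∈ U \ T, f j ≤ f i) {j : ι} (hj : j ∈ U \ T) :
    f j ≤ (∑ i ∈ U, f i) / t := by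
  -- `j ∉ T` forces `T ⊂ U`, so the truncation `min t #U` is inactive.
  have hTt : #T = t := by
    have : #T < #U := card_lt_card <| (ssubset_iff_of_subset hTU).2 ⟨j, mem_sdiff.1 hj⟩
    omega
  rw [le_div_iff₀ (by exact_mod_cast ht), mul_comm, ← nsmul_eq_mul, ← hTt]
  calc #T • f j ≤ ∑ i ∈ T, f i := card_nsmul_le_sum _ _ _ fun i hi => htop i hi j hj
    _ ≤ ∑ i ∈ U, f i := sum_le_sum_of_subset_of_nonneg hTU fun i hi _ => hf i hi

lemma sum_rpow_le_rpow_sub_one_mul {ι : Type*} {s : Finset ι} {f : ι → ℝ} {p M S : ℝ}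
    (hp : 1 ≤ p) (hM : 0 ≤ M) (hf : ∀ i ∈ s, 0 ≤ f i) (hfM : ∀ i ∈ s, f i ≤ M)
    (hS : ∑ i ∈ s, f i ≤ S) :
    ∑ i ∈ s, f i ^ p ≤ M ^ (p - 1) * S :=
  calc ∑ i ∈ s, f i ^ p ≤ ∑ i ∈ s, M ^ (p - 1) * f i := by
        refine sum_le_sum fun i hi => ?_
        have hsplit : f i ^ p = f i ^ (p - 1) * f i := by
          rw [← Real.rpow_add_one' (hf i hi) (by linarith), sub_add_cancel]
        rw [hsplit]
        exact mul_le_mul_of_nonneg_right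
          (Real.rpow_le_rpow (hf i hi) (hfM i hi) (by linarith)) (hf i hi)
    _ = M ^ (p - 1) * ∑ i ∈ s, f i := (mul_sum _ _ _).symm
    _ ≤ M ^ (p - 1) * S := by gcongr

lemma rpow_one_div_sub_one_mul_rpow {p t S : ℝ} (hp : 0 < p) (ht : 0 < t) (hS : 0 ≤ S) :
    (t ^ (1 / p - 1) * S) ^ p = (S / t) ^ (p - 1) * S := by
  have hexp : (1 / p - 1) * p = -(p - 1) := by field_simp; ring
  rw [Real.mul_rpow (by positivity) hS, ← Real.rpow_mul ht.le, hexp, Real.rpow_neg ht.le,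
    Real.div_rpow hS ht.le, div_mul_eq_mul_div, ← Real.rpow_add_one' hS (by simp [hp.ne']),
    sub_add_cancel, inv_mul_eq_div]

theorem stmt6 {n : ℕ} (x : Fin n → ℝ) (I : Finset (Fin n)) (t : ℕ) (ht : 1 ≤ t)
    (p : ℝ) (hp : 1 ≤ p) (T : Finset (Fin n))
    (hT1 : T ⊆ Iᶜ) (hT2 : T.card = min t Iᶜ.card)
    (hT3 : ∀ i ∈ T, ∀ j ∈ Iᶜ \ T, |x j| ≤ |x i|) :
    (∑ i ∈ (I ∪ T)ᶜ, |x i| ^ p) ^ (1/p) ≤ (t : ℝ) ^ (1/p - 1) * ∑ i ∈ Iᶜ, |x i| := by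
  set S := ∑ i ∈ Iᶜ, |x i|
  have hp0 : 0 < p := by linarith
  have ht0 : (0 : ℝ) < t := by exact_mod_cast ht
  have hcompl : (I ∪ T)ᶜ = Iᶜ \ T := by rw [compl_union, sdiff_eq_inter_compl]
  have hbound : ∑ i ∈ Iᶜ \ T, |x i| ^ p ≤ (S / t) ^ (p - 1) * S :=
    sum_rpow_le_rpow_sub_one_mul hp (by positivity) (fun _ _ => abs_nonneg _)
      (fun _ => le_sum_div_of_mem_sdiff_top ht (fun _ _ => abs_nonneg _) hT1 hT2 hT3)
      (sum_le_sum_of_subset_of_nonneg sdiff_subset fun _ _ _ => abs_nonneg _)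
  rw [hcompl, one_div, Real.rpow_inv_le_iff_of_pos (by positivity) (by positivity) hp0, ← one_div,
    rpow_one_div_sub_one_mul_rpow hp0 ht0 (by positivity)]
  exact hbound
end

section
/- Truncation error bound: Let x ∈ R^n be s-sparse and z ∈ R^n arbitrary. Let H_s(z) denote the vector obtained from z by setting all but its s largest-magnitude entries to zero. Then ‖H_s(z) - x‖_2 ≤ ((√5 + 1)/2) ‖z - x‖_2. -/
open Finset

open Real goldenRatio

/-!
Let `S` be the support of `x`, `K` the kept set, `A = S \ K` the part of the support that is
thrown away and `B = K \ S` the kept entries outside the support; `|A| ≤ |B|`. The error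
`H_s z - x` is `z - x` on `K` plus `x` on `A`. Since every entry on `B` dominates every entry on
`A`, `‖z_A‖ ≤ ‖z_B‖ = ‖(z - x)_B‖ =: u`, so with `v := ‖(z - x)_A‖` the triangle inequality gives
`‖x_A‖ ≤ u + v`. It remains to check `u² + (u + v)² ≤ φ² (u² + v²)`, which is the identity
`φ (φ² (u² + v²) - u² - (u + v)²) = (u - φ v)²`.
-/

theorem Finset.sum_le_sum_of_card_le_of_forall_le {ι M : Type*} [AddCommMonoid M] [LinearOrder M]
    [IsOrderedAddMonoid M] {A B : Finset ι} {g : ι → M} (hB : ∀ i ∈ B, 0 ≤ g i)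
    (hcard : #A ≤ #B) (hle : ∀ a ∈ A, ∀ b ∈ B, g a ≤ g b) :
    ∑ i ∈ A, g i ≤ ∑ i ∈ B, g i := by
  rcases A.eq_empty_or_nonempty with rfl | hA
  · simpa using sum_nonneg hB
  obtain ⟨B', hB'B, hB'card⟩ := exists_subset_card_eq hcard
  calc ∑ i ∈ A, g i ≤ #A • A.sup' hA g := sum_le_card_nsmul _ _ _ fun a ha => le_sup' g ha
    _ = #B' • A.sup' hA g := by rw [hB'card]
    _ ≤ ∑ i ∈ B', g i :=
      card_nsmul_le_sum _ _ _ fun b hb => sup'_le hA g fun a ha => hle a ha b (hB'B hb)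
    _ ≤ ∑ i ∈ B, g i := sum_le_sum_of_subset_of_nonneg hB'B fun i hi _ => hB i hi

theorem Real.sqrt_sum_sq_sub_le {ι : Type*} (s : Finset ι) (f g : ι → ℝ) :
    √(∑ i ∈ s, (f i - g i) ^ 2) ≤ √(∑ i ∈ s, f i ^ 2) + √(∑ i ∈ s, g i ^ 2) := by
  have hcs := sum_mul_le_sqrt_mul_sqrt s f (-g)
  simp only [Pi.neg_apply, neg_sq, mul_neg, sum_neg_distrib] at hcs
  have hf := sq_sqrt (sum_nonneg fun i (_ : i ∈ s) => sq_nonneg (f i))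
  have hg := sq_sqrt (sum_nonneg fun i (_ : i ∈ s) => sq_nonneg (g i))
  refine sqrt_le_iff.2 ⟨by positivity, ?_⟩
  calc ∑ i ∈ s, (f i - g i) ^ 2
      = ∑ i ∈ s, f i ^ 2 - 2 * ∑ i ∈ s, f i * g i + ∑ i ∈ s, g i ^ 2 := by
        simp only [sub_sq, sum_add_distrib, sum_sub_distrib, mul_sum, mul_assoc]
    _ ≤ _ := by nlinarith

theorem sq_add_sq_le_goldenRatio_sq_mul {u v c : ℝ} (hc : 0 ≤ c) (hcuv : c ≤ u + v) :
    u ^ 2 + c ^ 2 ≤ φ ^ 2 * (u ^ 2 + v ^ 2) := by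
  have hc2 : c ^ 2 ≤ (u + v) ^ 2 := pow_le_pow_left₀ hc hcuv 2
  have hidentity : φ * (φ ^ 2 * (u ^ 2 + v ^ 2) - u ^ 2 - (u + v) ^ 2) = (u - φ * v) ^ 2 := by
    linear_combination (φ * (u ^ 2 + v ^ 2) + u ^ 2) * goldenRatio_sq
  have := (mul_nonneg_iff_of_pos_left goldenRatio_pos).1 (hidentity ▸ sq_nonneg _)
  linarith

theorem sum_sq_restr_sub {k : ℕ} (K : Finset (Fin k)) (x z : Fin k → ℝ) :
    ∑ i, (restr K z i - x i) ^ 2 = ∑ i ∈ K, (z i - x i) ^ 2 + ∑ i ∈ Kᶜ, x i ^ 2 := by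
  rw [← sum_add_sum_compl K]
  congr 1 <;> refine sum_congr rfl fun i hi => ?_
  · simp [restr, hi]
  · simp [restr, mem_compl.1 hi]

theorem sum_sq_restr_sub_le {k : ℕ} (x z : Fin k → ℝ) (S K : Finset (Fin k))
    (hx : ∀ i ∉ S, x i = 0) (hcard : #S ≤ #K) (hK : ∀ i ∈ K, ∀ j ∉ K, |z j| ≤ |z i|) :
    ∑ i, (restr K z i - x i) ^ 2 ≤ φ ^ 2 * ∑ i, (z i - x i) ^ 2 := by
  have hdropped : ∑ i ∈ Kᶜ, x i ^ 2 = ∑ i ∈ S \ K, x i ^ 2 := by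
    refine (sum_subset (fun i hi => mem_compl.2 (mem_sdiff.1 hi).2) fun i hi hiA => ?_).symm
    rw [hx i fun hiS => hiA (mem_sdiff.2 ⟨hiS, mem_compl.1 hi⟩), sq, zero_mul]
  have hkept : ∑ i ∈ K, (z i - x i) ^ 2
      = ∑ i ∈ K ∩ S, (z i - x i) ^ 2 + ∑ i ∈ K \ S, z i ^ 2 := by
    rw [← sum_inter_add_sum_sdiff K S]
    congr 1
    exact sum_congr rfl fun i hi => by rw [hx i (mem_sdiff.1 hi).2, sub_zero]
  have herror : ∑ i ∈ K, (z i - x i) ^ 2 + ∑ i ∈ S \ K, (z i - x i) ^ 2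
      ≤ ∑ i, (z i - x i) ^ 2 := by
    rw [← sum_union disjoint_sdiff]
    exact sum_le_univ_sum_of_nonneg fun i => sq_nonneg _
  have hdominated : ∑ i ∈ S \ K, z i ^ 2 ≤ ∑ i ∈ K \ S, z i ^ 2 := by
    refine sum_le_sum_of_card_le_of_forall_le (fun i _ => sq_nonneg _)
      (card_sdiff_le_card_sdiff_iff.2 hcard) fun a ha b hb => ?_
    exact sq_le_sq.2 (hK b (mem_sdiff.1 hb).1 a (mem_sdiff.1 ha).2)
  have hmissed : √(∑ i ∈ S \ K, x i ^ 2)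
      ≤ √(∑ i ∈ K \ S, z i ^ 2) + √(∑ i ∈ S \ K, (z i - x i) ^ 2) := by
    have := sqrt_sum_sq_sub_le (S \ K) z (fun i => z i - x i)
    simp only [sub_sub_cancel] at this
    exact this.trans (by gcongr)
  have hgold := sq_add_sq_le_goldenRatio_sq_mul (sqrt_nonneg _) hmissed
  simp only [sq_sqrt (sum_nonneg fun i _ => sq_nonneg _)] at hgold
  have hw : 0 ≤ ∑ i ∈ K ∩ S, (z i - x i) ^ 2 := sum_nonneg fun i _ => sq_nonneg _
  have hφ : 1 ≤ φ ^ 2 := one_le_pow₀ one_lt_goldenRatio.le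
  rw [sum_sq_restr_sub, hdropped]
  calc ∑ i ∈ K, (z i - x i) ^ 2 + ∑ i ∈ S \ K, x i ^ 2
      ≤ φ ^ 2 * (∑ i ∈ K, (z i - x i) ^ 2 + ∑ i ∈ S \ K, (z i - x i) ^ 2) := by
        rw [hkept]
        linarith [le_mul_of_one_le_left hw hφ]
    _ ≤ φ ^ 2 * ∑ i, (z i - x i) ^ 2 := by gcongr

theorem l2_le_mul_l2_of_sum_sq_le {k : ℕ} {f g : Fin k → ℝ} {c : ℝ} (hc : 0 ≤ c)
    (h : ∑ i, f i ^ 2 ≤ c ^ 2 * ∑ i, g i ^ 2) : l2 f ≤ c * l2 g := by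
  unfold l2
  calc √(∑ i, f i ^ 2) ≤ √(c ^ 2 * ∑ i, g i ^ 2) := sqrt_le_sqrt h
    _ = c * √(∑ i, g i ^ 2) := by rw [sqrt_mul (sq_nonneg c), sqrt_sq hc]

theorem stmt7 {n s : ℕ} (x z : Fin n → ℝ)
    (Sx : Finset (Fin n)) (hSx : ∀ i ∉ Sx, x i = 0) (hcard : Sx.card ≤ s)
    (K : Finset (Fin n)) (hK : K.card = min s n)
    (hKmax : ∀ i ∈ K, ∀ j ∈ Kᶜ, |z j| ≤ |z i|) :
    l2 (restr K z - x) ≤ (Real.sqrt 5 + 1) / 2 * l2 (z - x) := by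
  have hSxK : #Sx ≤ #K := hK ▸ le_min hcard (by simpa using card_le_univ Sx)
  rw [add_comm]
  refine l2_le_mul_l2_of_sum_sq_le goldenRatio_pos.le ?_
  simpa using sum_sq_restr_sub_le x z Sx K hSx hSxK fun i hi j hj => hKmax i hi j (mem_compl.2 hj)
end

section
/- RIP implies contraction of the gradient step: Suppose A ∈ R^{m×n} satisfies the restricted isometry property of order s with constant δ_s < 1. Let x ∈ R^n, I ⊆ [n], and v ≥ 0 with |I ∪ supp(x)| ≤ s. Then ‖((I_n - v AᵀA)x)_I‖_2 ≤ (|1 - v| + v δ_s) ‖x‖_2. -/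
open Finset Matrix

def RIP {m n : ℕ} (A : Matrix (Fin m) (Fin n) ℝ) (s : ℕ) (δ : ℝ) : Prop :=
  ∀ (x : Fin n → ℝ) (J : Finset (Fin n)), J.card ≤ s →
    (1 - δ) * (l2 (restr J x))^2 ≤ (l2 (A.mulVec (restr J x)))^2 ∧
    (l2 (A.mulVec (restr J x)))^2 ≤ (1 + δ) * (l2 (restr J x))^2

/-!
Put `y = ((Iₙ - v AᵀA) x)_I`. As `y` is a coordinate projection,
`‖y‖² = ⟪y, x - v AᵀA x⟫ = (1 - v) ⟪y, x⟫ - v (⟪Ay, Ax⟫ - ⟪y, x⟫)`.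
Both `y` and `x` vanish off `I ∪ supp x`, a set of size at most `s`, and on such vectors RIP makes
`A` a `δ`-near-isometry; by polarization, `A` then moves inner products by at most `δ ‖y‖ ‖x‖`.
With Cauchy–Schwarz this gives `‖y‖² ≤ (|1 - v| + v δ) ‖y‖ ‖x‖`.
-/

open scoped RealInnerProductSpace

section NearIsometry

variable {E F : Type*} [NormedAddCommGroup E] [InnerProductSpace ℝ E]
  [NormedAddCommGroup F] [InnerProductSpace ℝ F] {T : E →ₗ[ℝ] F} {S : Submodule ℝ E} {δ : ℝ}

theorem abs_inner_map_sub_inner_le_mean_sq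
    (hT : ∀ z ∈ S, |‖T z‖ ^ 2 - ‖z‖ ^ 2| ≤ δ * ‖z‖ ^ 2) {u w : E} (hu : u ∈ S) (hw : w ∈ S) :
    |⟪T u, T w⟫ - ⟪u, w⟫| ≤ δ * (‖u‖ ^ 2 + ‖w‖ ^ 2) / 2 := by
  have hadd := hT (u + w) (S.add_mem hu hw)
  have hsub := hT (u - w) (S.sub_mem hu hw)
  rw [map_add, norm_add_sq_real, norm_add_sq_real] at hadd
  rw [map_sub, norm_sub_sq_real, norm_sub_sq_real] at hsub
  have hpar := parallelogram_law_with_norm ℝ u w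
  rw [abs_le] at hadd hsub ⊢
  constructor <;> nlinarith

theorem abs_inner_map_sub_inner_le
    (hT : ∀ z ∈ S, |‖T z‖ ^ 2 - ‖z‖ ^ 2| ≤ δ * ‖z‖ ^ 2) {u w : E} (hu : u ∈ S) (hw : w ∈ S) :
    |⟪T u, T w⟫ - ⟪u, w⟫| ≤ δ * ‖u‖ * ‖w‖ := by
  rcases eq_or_ne u 0 with rfl | hu0
  · simp
  rcases eq_or_ne w 0 with rfl | hw0
  · simp
  have hunit := abs_inner_map_sub_inner_le_mean_sq hT (S.smul_mem ‖u‖⁻¹ hu) (S.smul_mem ‖w‖⁻¹ hw)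
  have hpos : 0 < ‖u‖ * ‖w‖ := by positivity
  have hnorm {z : E} (hz : z ≠ 0) : ‖‖z‖⁻¹ • z‖ = 1 := by
    rw [norm_smul, norm_inv, norm_norm, inv_mul_cancel₀ (norm_ne_zero_iff.2 hz)]
  rw [map_smul, map_smul, real_inner_smul_left, real_inner_smul_right, real_inner_smul_left,
    real_inner_smul_right, hnorm hu0, hnorm hw0, ← mul_sub, ← mul_sub, ← mul_assoc, ← mul_inv,
    abs_mul, abs_of_pos (inv_pos.2 hpos), inv_mul_le_iff₀ hpos] at hunit
  linarith

end NearIsometry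

section l2

variable {k : ℕ}

theorem l2_eq_norm_toLp (x : Fin k → ℝ) : l2 x = ‖WithLp.toLp 2 x‖ := by
  simp [l2, EuclideanSpace.norm_eq]

theorem l2_nonneg (x : Fin k → ℝ) : 0 ≤ l2 x := Real.sqrt_nonneg _

theorem l2_sq (x : Fin k → ℝ) : l2 x ^ 2 = x ⬝ᵥ x := by
  rw [l2, Real.sq_sqrt (by positivity)]
  simp [dotProduct, sq]

theorem abs_dotProduct_le_l2_mul_l2 (x y : Fin k → ℝ) : |x ⬝ᵥ y| ≤ l2 x * l2 y := by
  simpa [l2_eq_norm_toLp, EuclideanSpace.inner_toLp_toLp, dotProduct_comm] using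
    abs_real_inner_le_norm (WithLp.toLp 2 x) (WithLp.toLp 2 y)

theorem restr_eq_self {J : Finset (Fin k)} {x : Fin k → ℝ} (hx : ∀ i ∉ J, x i = 0) :
    restr J x = x := by
  funext i
  by_cases hi : i ∈ J <;> simp [restr, hi, hx]

theorem l2_restr_sq (J : Finset (Fin k)) (x : Fin k → ℝ) :
    l2 (restr J x) ^ 2 = restr J x ⬝ᵥ x := by
  rw [l2_sq]
  refine Finset.sum_congr rfl fun i _ => ?_
  by_cases hi : i ∈ J <;> simp [restr, hi]

def supportedOn (J : Finset (Fin k)) : Submodule ℝ (EuclideanSpace ℝ (Fin k)) where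
  carrier := {z | ∀ i ∉ J, z i = 0}
  add_mem' hu hw i hi := by simp [hu i hi, hw i hi]
  zero_mem' _ _ := rfl
  smul_mem' c z hz i hi := by simp [hz i hi]

end l2

namespace RIP

variable {m n s : ℕ} {A : Matrix (Fin m) (Fin n) ℝ} {δ : ℝ} {J : Finset (Fin n)}

theorem abs_l2_mulVec_sq_sub_le (h : RIP A s δ) (hJ : J.card ≤ s) {x : Fin n → ℝ}
    (hx : ∀ i ∉ J, x i = 0) :
    |l2 (A *ᵥ x) ^ 2 - l2 x ^ 2| ≤ δ * l2 x ^ 2 := by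
  have := h x J hJ
  rw [restr_eq_self hx] at this
  rw [abs_le]
  constructor <;> linarith [this.1, this.2]

theorem abs_dotProduct_mulVec_sub_le (h : RIP A s δ) (hJ : J.card ≤ s) {u w : Fin n → ℝ}
    (hu : ∀ i ∉ J, u i = 0) (hw : ∀ i ∉ J, w i = 0) :
    |A *ᵥ u ⬝ᵥ A *ᵥ w - u ⬝ᵥ w| ≤ δ * l2 u * l2 w := by
  have hT : ∀ z ∈ supportedOn J, |‖toLpLin 2 2 A z‖ ^ 2 - ‖z‖ ^ 2| ≤ δ * ‖z‖ ^ 2 := by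
    intro z hz
    simpa [l2_eq_norm_toLp, toLpLin_apply] using h.abs_l2_mulVec_sq_sub_le hJ hz
  simpa [l2_eq_norm_toLp, EuclideanSpace.inner_toLp_toLp, dotProduct_comm, toLpLin_toLp] using
    abs_inner_map_sub_inner_le hT (u := WithLp.toLp 2 u) (w := WithLp.toLp 2 w) hu hw

end RIP

theorem stmt8_general {m n : ℕ} (A : Matrix (Fin m) (Fin n) ℝ) (s : ℕ) (δ v : ℝ)
    (hRIP : RIP A s δ) (x : Fin n → ℝ) (I Sx : Finset (Fin n))
    (hSx : ∀ i ∉ Sx, x i = 0) (hv : 0 ≤ v) (hcard : (I ∪ Sx).card ≤ s) :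
    l2 (restr I (x - v • (Aᵀ * A).mulVec x)) ≤ (|1 - v| + v * δ) * l2 x := by
  set y := restr I (x - v • (Aᵀ * A) *ᵥ x)
  have hx : ∀ i ∉ I ∪ Sx, x i = 0 := fun i hi => hSx i (by simp_all)
  have hy : ∀ i ∉ I ∪ Sx, y i = 0 := fun i hi => by simp_all [y, restr]
  have hyy : l2 y ^ 2 = (1 - v) * (y ⬝ᵥ x) - v * (A *ᵥ y ⬝ᵥ A *ᵥ x - y ⬝ᵥ x) := by
    have hAA : y ⬝ᵥ (Aᵀ * A) *ᵥ x = A *ᵥ y ⬝ᵥ A *ᵥ x := by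
      rw [← mulVec_mulVec, dotProduct_transpose_mulVec, dotProduct_comm]
    rw [l2_restr_sq, dotProduct_sub, dotProduct_smul, hAA, smul_eq_mul]
    ring
  have hyx := hRIP.abs_dotProduct_mulVec_sub_le hcard hy hx
  have hcs := abs_dotProduct_le_l2_mul_l2 y x
  have hbound : l2 y ^ 2 ≤ (|1 - v| + v * δ) * l2 x * l2 y := by
    calc l2 y ^ 2 ≤ |1 - v| * |y ⬝ᵥ x| + v * |A *ᵥ y ⬝ᵥ A *ᵥ x - y ⬝ᵥ x| := by
          rw [hyy, ← abs_mul]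
          nlinarith [le_abs_self ((1 - v) * (y ⬝ᵥ x)), neg_abs_le (A *ᵥ y ⬝ᵥ A *ᵥ x - y ⬝ᵥ x)]
      _ ≤ |1 - v| * (l2 y * l2 x) + v * (δ * l2 y * l2 x) := by gcongr
      _ = (|1 - v| + v * δ) * l2 x * l2 y := by ring
  have hδx : 0 ≤ δ * l2 x := by
    have := (abs_nonneg _).trans (hRIP.abs_l2_mulVec_sq_sub_le hcard hx)
    rcases (l2_nonneg x).eq_or_lt with h0 | hpos
    · rw [← h0, mul_zero]
    · nlinarith
  have hc : 0 ≤ (|1 - v| + v * δ) * l2 x := by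
    nlinarith [abs_nonneg (1 - v), l2_nonneg x]
  nlinarith [l2_nonneg y]

theorem stmt8 {m n : ℕ} (A : Matrix (Fin m) (Fin n) ℝ) (s : ℕ) (δ v : ℝ)
    (hδ : δ < 1) (hRIP : RIP A s δ) (x : Fin n → ℝ) (I Sx : Finset (Fin n))
    (hSx : ∀ i ∉ Sx, x i = 0) (hv : 0 ≤ v) (hcard : (I ∪ Sx).card ≤ s) :
    l2 (restr I (x - v • (Aᵀ * A).mulVec x)) ≤ (|1 - v| + v * δ) * l2 x :=
  stmt8_general A s δ v hRIP x I Sx hSx hv hcard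
end

section
/- Feasibility of the residual: Let b = A x̄ with x̄ supported on S, |S| = s, and let h(x) := ‖Ax - b‖_2^2 + λ(‖x‖_1 - ‖x‖_2) with λ > 0. If x* satisfies h(x*) ≤ h(x̄), then ‖(x* - x̄)_{S^c}‖_1 ≤ ‖(x* - x̄)_S‖_1 + ‖x* - x̄‖_2. -/
/-! The residual vanishes at `xbar`, so dividing the level-set inequality by `lam` gives
`‖x*‖₁ - ‖x*‖₂ ≤ ‖x̄‖₁ - ‖x̄‖₂`. With `h = x* - x̄` and `x̄` supported on `S`, the triangle
inequality on `S` and the equality `x* = h` off `S` give `‖x*‖₁ ≥ ‖x̄‖₁ - ‖h_S‖₁ + ‖h_{Sᶜ}‖₁`,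
while `‖x*‖₂ - ‖x̄‖₂ ≤ ‖h‖₂`. -/

open Finset

lemma l2_eq_norm {k : ℕ} (x : Fin k → ℝ) : l2 x = ‖WithLp.toLp 2 x‖ := by
  simp [EuclideanSpace.norm_eq, l2]

lemma l2_sub_l2_le {k : ℕ} (x y : Fin k → ℝ) : l2 x - l2 y ≤ l2 (x - y) := by
  simpa only [l2_eq_norm, WithLp.toLp_sub] using norm_sub_norm_le (WithLp.toLp 2 x) _

lemma l2_sub_self {k : ℕ} (x : Fin k → ℝ) : l2 (x - x) = 0 := by
  simp [l2]

lemma l1_restr {k : ℕ} (I : Finset (Fin k)) (x : Fin k → ℝ) :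
    l1 (restr I x) = ∑ i ∈ I, |x i| := by
  simp [l1, restr, apply_ite]

lemma l1_eq_sum_add_sum_compl {k : ℕ} (I : Finset (Fin k)) (x : Fin k → ℝ) :
    l1 x = ∑ i ∈ I, |x i| + ∑ i ∈ Iᶜ, |x i| :=
  (sum_add_sum_compl I _).symm

lemma l1_restr_compl_sub_le {k : ℕ} {S : Finset (Fin k)} {xbar : Fin k → ℝ}
    (hsupp : ∀ i ∉ S, xbar i = 0) (x : Fin k → ℝ) :
    l1 (restr Sᶜ (x - xbar)) ≤ l1 (restr S (x - xbar)) + (l1 x - l1 xbar) := by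
  have on_S : ∑ i ∈ S, |xbar i| ≤ ∑ i ∈ S, |(x - xbar) i| + ∑ i ∈ S, |x i| := by
    rw [← sum_add_distrib]
    refine sum_le_sum fun i _ => ?_
    simpa [abs_sub_comm] using abs_sub_le (xbar i) (x i) 0
  have off_S : ∑ i ∈ Sᶜ, |(x - xbar) i| = ∑ i ∈ Sᶜ, |x i| :=
    sum_congr rfl fun i hi => by simp [hsupp i (mem_compl.mp hi)]
  have l1_xbar : l1 xbar = ∑ i ∈ S, |xbar i| := by
    have : ∑ i ∈ Sᶜ, |xbar i| = 0 := sum_eq_zero fun i hi => by simp [hsupp i (mem_compl.mp hi)]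
    rw [l1_eq_sum_add_sum_compl S, this, add_zero]
  rw [l1_restr, l1_restr, l1_xbar, l1_eq_sum_add_sum_compl S x]
  linarith

lemma l1_restr_compl_sub_le_of_l1_sub_l2_le {k : ℕ} {S : Finset (Fin k)} {xbar x : Fin k → ℝ}
    (hsupp : ∀ i ∉ S, xbar i = 0) (hle : l1 x - l2 x ≤ l1 xbar - l2 xbar) :
    l1 (restr Sᶜ (x - xbar)) ≤ l1 (restr S (x - xbar)) + l2 (x - xbar) := by
  linarith [l1_restr_compl_sub_le hsupp x, l2_sub_l2_le x xbar]

theorem stmt11_general {m n : ℕ} (A : Matrix (Fin m) (Fin n) ℝ) (xbar xstar : Fin n → ℝ)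
    (b : Fin m → ℝ) (S : Finset (Fin n)) (lam : ℝ) (hlam : 0 < lam)
    (hb : b = A.mulVec xbar) (hsupp : ∀ i, xbar i ≠ 0 ↔ i ∈ S)
    (hlev : (l2 (A.mulVec xstar - b))^2 + lam * (l1 xstar - l2 xstar) ≤
            (l2 (A.mulVec xbar - b))^2 + lam * (l1 xbar - l2 xbar)) :
    l1 (restr Sᶜ (xstar - xbar)) ≤ l1 (restr S (xstar - xbar)) + l2 (xstar - xbar) := by
  have hvanish : ∀ i ∉ S, xbar i = 0 := fun i hi => not_not.mp (mt (hsupp i).mp hi)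
  rw [hb, l2_sub_self] at hlev
  refine l1_restr_compl_sub_le_of_l1_sub_l2_le hvanish (le_of_mul_le_mul_left ?_ hlam)
  linarith [sq_nonneg (l2 (A.mulVec xstar - A.mulVec xbar))]

theorem stmt11 {m n : ℕ} (A : Matrix (Fin m) (Fin n) ℝ) (xbar xstar : Fin n → ℝ)
    (b : Fin m → ℝ) (S : Finset (Fin n)) (s : ℕ) (lam : ℝ) (hlam : 0 < lam)
    (hb : b = A.mulVec xbar) (hsupp : ∀ i, xbar i ≠ 0 ↔ i ∈ S) (hcardS : S.card = s)
    (hlev : (l2 (A.mulVec xstar - b))^2 + lam * (l1 xstar - l2 xstar) ≤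
            (l2 (A.mulVec xbar - b))^2 + lam * (l1 xbar - l2 xbar)) :
    l1 (restr Sᶜ (xstar - xbar)) ≤ l1 (restr S (xstar - xbar)) + l2 (xstar - xbar) :=
  stmt11_general A xbar xstar b S lam hlam hb hsupp hlev
end
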